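/- Define b₀₁ = −(1/14)·(9q₂₁² − 4kq₄₀)/(3q₂₁² − kq₄₀), assuming k ≠ 0, q₂₁ ≠ 0, 3q₂₁² − kq₄₀ ≠ 0. Then kq₄₀ − 4q₂₁² > 0 implies −1/2 < b₀₁ < −2/7. -/
import Mathlib

/-- If `kq₄₀ − 4q₂₁² > 0` (with `k ≠ 0`, `q₂₁ ≠ 0`, `3q₂₁² − kq₄₀ ≠ 0`), then the
normal-form invariant `b₀₁ = −(1/14)(9q₂₁² − 4kq₄₀)/(3q₂₁² − kq₄₀)` satisfies
`−1/2 < b₀₁ < −2/7`. -/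
theorem b01_range (k q₂₁ q₄₀ : ℝ) (hk : k ≠ 0) (hq : q₂₁ ≠ 0)
    (h3 : 3*q₂₁^2 - k*q₄₀ ≠ 0) (h : k*q₄₀ - 4*q₂₁^2 > 0) :
    -1/2 < -(1/14)*(9*q₂₁^2 - 4*k*q₄₀)/(3*q₂₁^2 - k*q₄₀) ∧
    -(1/14)*(9*q₂₁^2 - 4*k*q₄₀)/(3*q₂₁^2 - k*q₄₀) < -2/7 := by
  have hq2 : 0 < q₂₁^2 := pow_pos (abs_pos.mpr hq) 2 |>.trans_eq (by rw [sq_abs])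
  have hD : 3*q₂₁^2 - k*q₄₀ < 0 := by nlinarith
  constructor
  · rw [lt_div_iff_of_neg hD]; nlinarith
  · rw [div_lt_iff_of_neg hD]; nlinarith
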